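/- Let N, M₁, M₂ be positive integers with M₁ ≤ M₂ − 1 and M₁ < N, let m, n be integers with 0 ≤ n ≤ m ≤ M₁, and set ℓ_m = min(M₁ − m, n). Let z_1, …, z_{M₁} ∈ ℂ be pairwise distinct and w_1, …, w_{M₂} ∈ ℂ be pairwise distinct. Then Σ_{i=1}^{M₁} Σ_{k=1}^{M₂} z_i w_k ∏_{j≠i} ((z_j − w_k)/(z_j − z_i)) · ∏_{l≠k} ((w_l − z_i)/(w_l − w_k)) · Σ_{γ=1}^{N} Σ_{δ=1}^{N} η̄_γ^{m} η̄_δ^{n} ∏_{j≠i} (η_γ − z_j)(η_δ − z_j) = (M₁ − m) Σ_{γ,δ=1}^{N} η̄_γ^{m} η̄_δ^{n} ∏_{i=1}^{M₁} (η_γ − z_i)(η_δ − z_i) − Σ_{ℓ=1}^{ℓ_m} (m − n + 2ℓ) Σ_{γ,δ=1}^{N} η̄_γ^{m+ℓ} η̄_δ^{n−ℓ} ∏_{i=1}^{M₁} (η_γ − z_i)(η_δ − z_i). -/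

import Mathlib

/-!
Write `P = ∏ᵢ (X - zᵢ)` and `Qᵢ = ∏_{j ≠ i} (X - zⱼ)`. Since `X Qᵢ` has degree `M₁ < M₂`, Lagrange
interpolation at the nodes `w` collapses the sum over `k` to `zᵢ²`. All polynomials involved have
degree `< N`, so by orthogonality of the `N`-th roots of unity each sum `∑_γ η̄_γ^a F(η_γ)` is
`N` times the `a`-th coefficient of `F`. What remains is the coefficient identity
`∑ᵢ zᵢ² [Xᵐ]Qᵢ [Xⁿ]Qᵢ = (M₁ - m) pₘ pₙ - ∑_ℓ (m - n + 2ℓ) p_{m+ℓ} p_{n-ℓ}` for `P = ∑ pₐ Xᵃ`,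
proved by induction on `n` from `zᵢ [X^{a+1}]Qᵢ = [Xᵃ]Qᵢ - p_{a+1}` and `∑ᵢ Qᵢ = P'`.
-/

open Finset

/-- The `N`-th roots of unity: `η_γ = exp(2πiγ/N)` for `γ = 1, …, N`. -/
noncomputable def η (N : ℕ) (γ : Fin N) : ℂ :=
  Complex.exp (2 * Real.pi * Complex.I * ((γ : ℕ) + 1) / N)

open Polynomial Lagrange

theorem sum_Icc_one_succ {M : Type*} [AddCommMonoid M] (f : ℕ → M) (n : ℕ) :
    ∑ ℓ ∈ Icc 1 (n + 1), f ℓ = f 1 + ∑ ℓ ∈ Icc 1 n, f (ℓ + 1) := by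
  rw [← Ico_add_one_right_eq_Icc, ← Ico_add_one_right_eq_Icc, sum_Ico_eq_sum_range,
    sum_Ico_eq_sum_range]
  simp only [add_tsub_cancel_right, sum_range_succ', add_zero, ← add_assoc]
  exact add_comm _ _

theorem natDegree_nodal_le {R : Type*} [CommRing R] {ι : Type*} (s : Finset ι) (v : ι → R) :
    (nodal s v).natDegree ≤ #s :=
  calc (nodal s v).natDegree ≤ ∑ i ∈ s, (X - C (v i) : R[X]).natDegree :=
      natDegree_prod_le s _
    _ ≤ ∑ _i ∈ s, 1 := sum_le_sum fun i _ => natDegree_X_sub_C_le (v i)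
    _ = #s := by rw [sum_const, smul_eq_mul, mul_one]

section NodalCoeff

variable {R : Type*} [CommRing R] {ι : Type*} [DecidableEq ι] (s : Finset ι) (v : ι → R)

theorem mul_coeff_zero_nodal_erase {i : ι} (hi : i ∈ s) :
    v i * (nodal (s.erase i) v).coeff 0 = -(nodal s v).coeff 0 := by
  rw [nodal_eq_mul_nodal_erase hi, sub_mul, coeff_sub, coeff_C_mul, mul_coeff_zero,
    coeff_X_zero, zero_mul, zero_sub, neg_neg]

theorem mul_coeff_succ_nodal_erase {i : ι} (hi : i ∈ s) (a : ℕ) :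
    v i * (nodal (s.erase i) v).coeff (a + 1) =
      (nodal (s.erase i) v).coeff a - (nodal s v).coeff (a + 1) := by
  rw [nodal_eq_mul_nodal_erase hi, sub_mul, coeff_sub, coeff_C_mul, coeff_X_mul, sub_sub_cancel]

theorem sum_coeff_nodal_erase (a : ℕ) :
    ∑ i ∈ s, (nodal (s.erase i) v).coeff a = ((a : R) + 1) * (nodal s v).coeff (a + 1) := by
  rw [← finsetSum_coeff, ← derivative_nodal, coeff_derivative, mul_comm]

theorem sum_mul_coeff_nodal_erase (a : ℕ) :
    ∑ i ∈ s, v i * (nodal (s.erase i) v).coeff a = ((a : R) - #s) * (nodal s v).coeff a := by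
  cases a with
  | zero =>
    rw [sum_congr rfl fun i hi => mul_coeff_zero_nodal_erase s v hi, sum_const, nsmul_eq_mul]
    push_cast
    ring
  | succ a =>
    rw [sum_congr rfl fun i hi => mul_coeff_succ_nodal_erase s v hi a, sum_sub_distrib,
      sum_coeff_nodal_erase, sum_const, nsmul_eq_mul]
    push_cast
    ring

theorem sum_sq_mul_coeff_nodal_erase_mul_coeff_succ (m n : ℕ) :
    ∑ i ∈ s, v i ^ 2 * (nodal (s.erase i) v).coeff m * (nodal (s.erase i) v).coeff (n + 1) =
      ∑ i ∈ s, v i ^ 2 * (nodal (s.erase i) v).coeff (m + 1) * (nodal (s.erase i) v).coeff n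
        + ((n : R) - #s) * (nodal s v).coeff (m + 1) * (nodal s v).coeff n
        - ((m : R) - #s) * (nodal s v).coeff m * (nodal s v).coeff (n + 1) := by
  have h : ∀ i ∈ s,
      v i ^ 2 * (nodal (s.erase i) v).coeff m * (nodal (s.erase i) v).coeff (n + 1) =
        v i ^ 2 * (nodal (s.erase i) v).coeff (m + 1) * (nodal (s.erase i) v).coeff n
          + (nodal s v).coeff (m + 1) * (v i * (nodal (s.erase i) v).coeff n)
          - (nodal s v).coeff (n + 1) * (v i * (nodal (s.erase i) v).coeff m) := by
    intro i hi
    linear_combination (v i * (nodal (s.erase i) v).coeff m) * mul_coeff_succ_nodal_erase s v hi n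
      - (v i * (nodal (s.erase i) v).coeff n) * mul_coeff_succ_nodal_erase s v hi m
  rw [sum_congr rfl h, sum_sub_distrib, sum_add_distrib, ← mul_sum, ← mul_sum,
    sum_mul_coeff_nodal_erase, sum_mul_coeff_nodal_erase]
  ring

theorem sum_sq_mul_coeff_nodal_erase_mul_coeff (m n : ℕ) :
    ∑ i ∈ s, v i ^ 2 * (nodal (s.erase i) v).coeff m * (nodal (s.erase i) v).coeff n =
      ((#s : R) - m) * (nodal s v).coeff m * (nodal s v).coeff n
        - ∑ ℓ ∈ Icc 1 n, ((m : R) - n + 2 * ℓ) * (nodal s v).coeff (m + ℓ)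
            * (nodal s v).coeff (n - ℓ) := by
  induction n generalizing m with
  | zero =>
    have h : ∀ i ∈ s, v i ^ 2 * (nodal (s.erase i) v).coeff m * (nodal (s.erase i) v).coeff 0 =
        -(nodal s v).coeff 0 * (v i * (nodal (s.erase i) v).coeff m) := by
      intro i hi
      rw [← mul_coeff_zero_nodal_erase s v hi]
      ring
    rw [sum_congr rfl h, ← mul_sum, sum_mul_coeff_nodal_erase, Icc_eq_empty_of_lt zero_lt_one,
      sum_empty]
    ring
  | succ n ih =>
    have h : ∀ ℓ ∈ Icc 1 n,
        ((m : R) - (n + 1 : ℕ) + 2 * (ℓ + 1 : ℕ)) * (nodal s v).coeff (m + (ℓ + 1))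
            * (nodal s v).coeff (n + 1 - (ℓ + 1)) =
          (((m + 1 : ℕ) : R) - n + 2 * ℓ) * (nodal s v).coeff (m + 1 + ℓ)
            * (nodal s v).coeff (n - ℓ) := by
      intro ℓ _
      rw [Nat.add_sub_add_right, ← add_assoc, add_right_comm m ℓ 1]
      push_cast
      ring
    rw [sum_sq_mul_coeff_nodal_erase_mul_coeff_succ, ih, sum_Icc_one_succ, sum_congr rfl h]
    push_cast
    ring

theorem sum_sq_mul_coeff_nodal_erase_mul_coeff_min (m n : ℕ) :
    ∑ i ∈ s, v i ^ 2 * (nodal (s.erase i) v).coeff m * (nodal (s.erase i) v).coeff n =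
      ((#s : R) - m) * (nodal s v).coeff m * (nodal s v).coeff n
        - ∑ ℓ ∈ Icc 1 (min (#s - m) n), ((m : R) - n + 2 * ℓ) * (nodal s v).coeff (m + ℓ)
            * (nodal s v).coeff (n - ℓ) := by
  rw [sum_sq_mul_coeff_nodal_erase_mul_coeff]
  congr 1
  refine (sum_subset (Icc_subset_Icc_right (min_le_right _ _)) fun ℓ hℓ hℓ' => ?_).symm
  rw [coeff_eq_zero_of_natDegree_lt ((natDegree_nodal_le s v).trans_lt ?_), mul_zero, zero_mul]
  simp only [mem_Icc] at hℓ hℓ'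
  omega

end NodalCoeff

section Interpolation

variable {F : Type*} [Field F] {ι : Type*}

theorem prod_sub_div_sub (s : Finset ι) (a : ι → F) (b c : F) :
    ∏ j ∈ s, (a j - b) / (a j - c) = (∏ j ∈ s, (b - a j)) / ∏ j ∈ s, (c - a j) := by
  rw [← prod_div_distrib]
  exact prod_congr rfl fun j _ => by rw [← neg_div_neg_eq, neg_sub, neg_sub]

theorem eval_eq_sum_eval_mul_prod [DecidableEq ι] {t : Finset ι} {w : ι → F}
    (hw : Set.InjOn w t) {f : F[X]} (hf : f.degree < #t) (x : F) :
    f.eval x = ∑ k ∈ t, f.eval (w k) * ∏ l ∈ t.erase k, (w l - x) / (w l - w k) := by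
  conv_lhs => rw [eq_interpolate hw hf]
  simp only [interpolate_apply, eval_finsetSum, eval_mul, eval_C, Lagrange.basis, eval_prod,
    basisDivisor, eval_sub, eval_X]
  refine sum_congr rfl fun k _ => congrArg _ (prod_congr rfl fun l _ => ?_)
  rw [← neg_div_neg_eq, neg_sub, neg_sub, div_eq_inv_mul]

theorem sum_mul_prod_div_mul_prod_div_eq_sq [DecidableEq ι] {κ : Type*} [DecidableEq κ]
    {s : Finset κ} {z : κ → F} (hz : Set.InjOn z s) {t : Finset ι} {w : ι → F}
    (hw : Set.InjOn w t) (hst : #s < #t) {i : κ} (hi : i ∈ s) :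
    ∑ k ∈ t, z i * w k * (∏ j ∈ s.erase i, (z j - w k) / (z j - z i)) *
        ∏ l ∈ t.erase k, (w l - z i) / (w l - w k) = z i ^ 2 := by
  set f : F[X] := X * nodal (s.erase i) z
  have hf : f.degree < #t := by
    calc f.degree = 1 + (#s - 1 : ℕ) := by
          rw [degree_mul, degree_X, degree_nodal, card_erase_of_mem hi]
      _ < #t := by
          have := card_pos.mpr ⟨i, hi⟩
          exact_mod_cast (by omega : 1 + (#s - 1) < #t)
  have hf_eval : ∀ x, f.eval x = x * ∏ j ∈ s.erase i, (x - z j) := fun x => by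
    rw [eval_mul, eval_X, eval_nodal]
  have hD : ∏ j ∈ s.erase i, (z i - z j) ≠ 0 := prod_ne_zero_iff.mpr fun j hj =>
    sub_ne_zero.mpr fun h => (ne_of_mem_erase hj) (hz (mem_of_mem_erase hj) hi h.symm)
  calc _ = z i / (∏ j ∈ s.erase i, (z i - z j)) *
        ∑ k ∈ t, f.eval (w k) * ∏ l ∈ t.erase k, (w l - z i) / (w l - w k) := by
        rw [mul_sum]
        refine sum_congr rfl fun k _ => ?_
        rw [prod_sub_div_sub, hf_eval]
        ring
    _ = z i ^ 2 := by
        rw [← eval_eq_sum_eval_mul_prod hw hf, hf_eval]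
        field_simp

end Interpolation

section RootsOfUnity

variable {N : ℕ}

theorem η_eq_pow (γ : Fin N) :
    η N γ = Complex.exp (2 * Real.pi * Complex.I / N) ^ ((γ : ℕ) + 1) := by
  have hN : (N : ℂ) ≠ 0 := Nat.cast_ne_zero.mpr γ.pos.ne'
  rw [← Complex.exp_nat_mul, η]
  congr 1
  push_cast
  field_simp

theorem conj_η (γ : Fin N) : starRingEnd ℂ (η N γ) = (η N γ)⁻¹ := by
  rw [η, ← Complex.exp_conj, ← Complex.exp_neg]
  congr 1
  simp only [map_div₀, map_mul, Complex.conj_I, map_ofNat, Complex.conj_ofReal, map_natCast,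
    map_add, map_one]
  ring

theorem sum_η_zpow (k : ℤ) :
    ∑ γ : Fin N, η N γ ^ k = if (N : ℤ) ∣ k then (N : ℂ) else 0 := by
  rcases eq_or_ne N 0 with rfl | hN
  · simp
  have hζ := Complex.isPrimitiveRoot_exp N hN
  set ω := Complex.exp (2 * Real.pi * Complex.I / N) ^ k
  have hterm : ∀ γ : Fin N, η N γ ^ k = ω ^ ((γ : ℕ) + 1) := fun γ => by
    rw [η_eq_pow, ← zpow_natCast, ← zpow_mul, mul_comm _ k, zpow_mul, zpow_natCast]
  rw [sum_congr rfl fun γ _ => hterm γ, Fin.sum_univ_eq_sum_range (fun g => ω ^ (g + 1)) N]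
  split_ifs with hk
  · have hω : ω = 1 := (hζ.zpow_eq_one_iff_dvd k).mpr hk
    simp [hω]
  · have hω : ω ≠ 1 := fun h => hk ((hζ.zpow_eq_one_iff_dvd k).mp h)
    have hωN : ω ^ N = 1 := by
      rw [← zpow_natCast, ← zpow_mul, mul_comm k, zpow_mul, zpow_natCast, hζ.pow_eq_one, one_zpow]
    simp_rw [pow_succ, ← sum_mul, geom_sum_eq hω, hωN, sub_self, zero_div, zero_mul]

theorem sum_conj_η_pow_mul_η_pow {a r : ℕ} (ha : a < N) (hr : r < N) :
    ∑ γ : Fin N, starRingEnd ℂ (η N γ) ^ a * η N γ ^ r = if r = a then (N : ℂ) else 0 := by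
  have hterm : ∀ γ : Fin N,
      starRingEnd ℂ (η N γ) ^ a * η N γ ^ r = η N γ ^ ((r : ℤ) - a) := fun γ => by
    have hη : η N γ ≠ 0 := Complex.exp_ne_zero _
    rw [conj_η, inv_pow, zpow_sub₀ hη, zpow_natCast, zpow_natCast, div_eq_inv_mul]
  have hdvd : (N : ℤ) ∣ (r : ℤ) - a ↔ r = a := by
    refine ⟨fun h => ?_, fun h => by rw [h, sub_self]; exact dvd_zero _⟩
    have := Int.eq_zero_of_abs_lt_dvd h (by rw [abs_sub_lt_iff]; omega)
    omega
  simp only [sum_congr rfl fun γ _ => hterm γ, sum_η_zpow, hdvd]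

theorem sum_conj_η_pow_mul_eval {P : ℂ[X]} (hP : P.natDegree < N) {a : ℕ} (ha : a < N) :
    ∑ γ : Fin N, starRingEnd ℂ (η N γ) ^ a * P.eval (η N γ) = N * P.coeff a := by
  calc _ = ∑ r ∈ range N, P.coeff r * ∑ γ : Fin N, starRingEnd ℂ (η N γ) ^ a * η N γ ^ r := by
        simp_rw [eval_eq_sum_range' hP, mul_sum]
        rw [sum_comm]
        exact sum_congr rfl fun r _ => sum_congr rfl fun γ _ => by ring
    _ = ∑ r ∈ range N, if r = a then N * P.coeff r else 0 := by
        refine sum_congr rfl fun r hr => ?_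
        rw [sum_conj_η_pow_mul_η_pow ha (mem_range.mp hr)]
        split_ifs <;> ring
    _ = N * P.coeff a := by rw [sum_ite_eq', if_pos (mem_range.mpr ha)]

end RootsOfUnity

theorem sum_sum_conj_η_pow_mul_prod {N : ℕ} {ι : Type*} (s : Finset ι) (v : ι → ℂ)
    (hs : #s < N) {a b : ℕ} (ha : a < N) (hb : b < N) :
    ∑ γ : Fin N, ∑ δ : Fin N, starRingEnd ℂ (η N γ) ^ a * starRingEnd ℂ (η N δ) ^ b *
        ∏ j ∈ s, ((η N γ - v j) * (η N δ - v j)) =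
      (N : ℂ) ^ 2 * ((nodal s v).coeff a * (nodal s v).coeff b) := by
  have hdeg : (nodal s v).natDegree < N := (natDegree_nodal_le s v).trans_lt hs
  calc _ = (∑ γ : Fin N, starRingEnd ℂ (η N γ) ^ a * (nodal s v).eval (η N γ)) *
        ∑ δ : Fin N, starRingEnd ℂ (η N δ) ^ b * (nodal s v).eval (η N δ) := by
        rw [sum_mul_sum]
        refine sum_congr rfl fun γ _ => sum_congr rfl fun δ _ => ?_
        rw [prod_mul_distrib, eval_nodal, eval_nodal]
        ring
    _ = _ := by
        rw [sum_conj_η_pow_mul_eval hdeg ha, sum_conj_η_pow_mul_eval hdeg hb]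
        ring

theorem stmt3_general (N M₁ M₂ : ℕ)
    (h12 : M₁ ≤ M₂ - 1) (hMN : M₁ < N) (m n : ℕ) (hnm : n ≤ m) (hm : m ≤ M₁)
    (z : Fin M₁ → ℂ) (hz : Function.Injective z)
    (w : Fin M₂ → ℂ) (hw : Function.Injective w) :
    (∑ i : Fin M₁, ∑ k : Fin M₂,
      z i * w k * (∏ j ∈ univ.erase i, (z j - w k) / (z j - z i)) *
        (∏ l ∈ univ.erase k, (w l - z i) / (w l - w k)) *
        ∑ γ : Fin N, ∑ δ : Fin N,
          (starRingEnd ℂ) (η N γ) ^ m * (starRingEnd ℂ) (η N δ) ^ n *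
            ∏ j ∈ univ.erase i, ((η N γ - z j) * (η N δ - z j)))
    = ((M₁ : ℂ) - m) *
        (∑ γ : Fin N, ∑ δ : Fin N,
          (starRingEnd ℂ) (η N γ) ^ m * (starRingEnd ℂ) (η N δ) ^ n *
            ∏ i : Fin M₁, ((η N γ - z i) * (η N δ - z i)))
      - ∑ ℓ ∈ Finset.Icc 1 (min (M₁ - m) n),
          ((m : ℂ) - n + 2 * ℓ) *
            ∑ γ : Fin N, ∑ δ : Fin N,
              (starRingEnd ℂ) (η N γ) ^ (m + ℓ) * (starRingEnd ℂ) (η N δ) ^ (n - ℓ) *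
                ∏ i : Fin M₁, ((η N γ - z i) * (η N δ - z i)) := by
  have hmN : m < N := hm.trans_lt hMN
  have hnN : n < N := (hnm.trans hm).trans_lt hMN
  have hP : #(univ : Finset (Fin M₁)) < N := by rwa [card_univ, Fintype.card_fin]
  calc _ = (N : ℂ) ^ 2 * ∑ i, z i ^ 2 * (nodal (univ.erase i) z).coeff m
          * (nodal (univ.erase i) z).coeff n := by
        rw [mul_sum]
        refine sum_congr rfl fun i _ => ?_
        have hM : #(univ : Finset (Fin M₁)) < #(univ : Finset (Fin M₂)) := by
          simp only [card_univ, Fintype.card_fin]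
          have := i.pos
          omega
        rw [← sum_mul, sum_mul_prod_div_mul_prod_div_eq_sq hz.injOn hw.injOn hM (mem_univ i),
          sum_sum_conj_η_pow_mul_prod _ z ((card_erase_le).trans_lt hP) hmN hnN]
        ring
    _ = _ := by
        rw [sum_sq_mul_coeff_nodal_erase_mul_coeff_min,
          sum_sum_conj_η_pow_mul_prod univ z hP hmN hnN, mul_sub, mul_sum]
        simp only [card_univ, Fintype.card_fin]
        congr 1
        · ring
        · refine sum_congr rfl fun ℓ hℓ => ?_
          rw [mem_Icc] at hℓ
          rw [sum_sum_conj_η_pow_mul_prod univ z hP (by omega) (by omega)]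
          ring

theorem stmt3 (N M₁ M₂ : ℕ) (hN : 0 < N) (hM₁ : 0 < M₁) (hM₂ : 0 < M₂)
    (h12 : M₁ ≤ M₂ - 1) (hMN : M₁ < N) (m n : ℕ) (hnm : n ≤ m) (hm : m ≤ M₁)
    (z : Fin M₁ → ℂ) (hz : Function.Injective z)
    (w : Fin M₂ → ℂ) (hw : Function.Injective w) :
    (∑ i : Fin M₁, ∑ k : Fin M₂,
      z i * w k * (∏ j ∈ univ.erase i, (z j - w k) / (z j - z i)) *
        (∏ l ∈ univ.erase k, (w l - z i) / (w l - w k)) *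
        ∑ γ : Fin N, ∑ δ : Fin N,
          (starRingEnd ℂ) (η N γ) ^ m * (starRingEnd ℂ) (η N δ) ^ n *
            ∏ j ∈ univ.erase i, ((η N γ - z j) * (η N δ - z j)))
    = ((M₁ : ℂ) - m) *
        (∑ γ : Fin N, ∑ δ : Fin N,
          (starRingEnd ℂ) (η N γ) ^ m * (starRingEnd ℂ) (η N δ) ^ n *
            ∏ i : Fin M₁, ((η N γ - z i) * (η N δ - z i)))
      - ∑ ℓ ∈ Finset.Icc 1 (min (M₁ - m) n),
          ((m : ℂ) - n + 2 * ℓ) *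
            ∑ γ : Fin N, ∑ δ : Fin N,
              (starRingEnd ℂ) (η N γ) ^ (m + ℓ) * (starRingEnd ℂ) (η N δ) ^ (n - ℓ) *
                ∏ i : Fin M₁, ((η N γ - z i) * (η N δ - z i)) :=
  stmt3_general N M₁ M₂ h12 hMN m n hnm hm z hz w hw
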